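/- arXiv:2208.08267 — 2 statements merged into one kernel-verified Lean document; each statement's English description precedes it below -/
import Mathlib

section
/- Let V be a real inner product space, let a : V × V → ℝ be a symmetric bilinear form with a(v,v) ≥ 0 for all v ∈ V, let τ > 0 and N ∈ ℕ, and let (u^n)_{n=0,…,N}, (d^n)_{n=1,…,N} ⊂ V satisfy u^n = u^{n-1} + τ d^n and ‖d^n‖² + a(u^n, d^n) = 0 for all n = 1,…,N. Then for every N' = 1,…,N one has (1/2) a(u^{N'}, u^{N'}) + τ ∑_{n=1}^{N'} ‖d^n‖² ≤ (1/2) a(u^0, u^0). -/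
open scoped RealInnerProductSpace

/-- Unconditional energy stability of the linearized time-stepping scheme:
if `u n = u (n-1) + τ • d n` and `‖d n‖² + a(u n, d n) = 0`, with `a` a symmetric
positive-semidefinite bilinear form, then
`(1/2) a(u N', u N') + τ ∑_{n=1}^{N'} ‖d n‖² ≤ (1/2) a(u 0, u 0)`. -/
theorem stmt_3 {V : Type*} [NormedAddCommGroup V] [InnerProductSpace ℝ V]
    (a : V →ₗ[ℝ] V →ₗ[ℝ] ℝ)
    (hsymm : ∀ v w : V, a v w = a w v)
    (hpos : ∀ v : V, 0 ≤ a v v)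
    (τ : ℝ) (hτ : 0 < τ) (N : ℕ) (u : ℕ → V) (d : ℕ → V)
    (hupd : ∀ n, 1 ≤ n → n ≤ N → u n = u (n - 1) + τ • d n)
    (hscheme : ∀ n, 1 ≤ n → n ≤ N → ‖d n‖ ^ 2 + a (u n) (d n) = 0) :
    ∀ N', 1 ≤ N' → N' ≤ N →
      (1 / 2) * a (u N') (u N') + τ * ∑ n ∈ Finset.Icc 1 N', ‖d n‖ ^ 2 ≤
        (1 / 2) * a (u 0) (u 0) := by
  have key : ∀ n, 1 ≤ n → n ≤ N →
      (1 / 2) * a (u n) (u n) + τ * ‖d n‖ ^ 2 ≤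
        (1 / 2) * a (u (n - 1)) (u (n - 1)) := by
    intro n h1 h2
    have hu : u (n - 1) = u n - τ • d n := by
      rw [hupd n h1 h2]; abel
    have hs : a (u n) (d n) = -‖d n‖ ^ 2 := by
      have := hscheme n h1 h2; linarith
    have hdd : 0 ≤ a (d n) (d n) := hpos _
    rw [hu]
    simp only [map_sub, map_smul, LinearMap.sub_apply, LinearMap.smul_apply,
      smul_eq_mul, hs, hsymm (d n) (u n)]
    nlinarith [sq_nonneg τ]
  intro N' h1 hN'
  induction N' with
  | zero => omega
  | succ m ih =>
    rcases Nat.eq_or_lt_of_le h1 with h | h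
    · have hm : m = 0 := by omega
      subst hm
      have := key 1 le_rfl hN'
      simpa using this
    · have hm1 : 1 ≤ m := by omega
      have hmN : m ≤ N := by omega
      have ihm := ih hm1 hmN
      have hk := key (m + 1) (by omega) hN'
      simp only [Nat.add_sub_cancel] at hk
      rw [Finset.sum_Icc_succ_top (by omega : 1 ≤ m + 1)]
      have hd : (0:ℝ) ≤ ‖d (m+1)‖ ^ 2 := by positivity
      nlinarith
end

section
/- Let V be a real inner product space, let a : V × V → ℝ be a symmetric bilinear form with a(v,v) ≥ 0 for all v ∈ V, let τ > 0 and N ∈ ℕ, and let (u^n)_{n=0,…,N}, (d^n)_{n=1,…,N} ⊂ V satisfy u^n = u^{n-1} + τ d^n, ⟨d^n, u^{n-1}⟩ = 0, and ‖d^n‖² + a(u^n, d^n) = 0 for all n = 1,…,N. Then for every N' = 0,…,N one has 0 ≤ ‖u^{N'}‖² − ‖u^0‖² = τ² ∑_{j=1}^{N'} ‖d^j‖² ≤ (τ/2) a(u^0, u^0), i.e., the violation of the norm constraint is of order O(τ). -/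
open scoped RealInnerProductSpace

/-- Controlled constraint violation for the linearized scheme: under the update rule
`u n = u (n-1) + τ • d n` with `⟨d n, u (n-1)⟩ = 0` and energy relation
`‖d n‖² + a(u n, d n) = 0`, one has
`0 ≤ ‖u N'‖² − ‖u 0‖² = τ² ∑_{j=1}^{N'} ‖d j‖² ≤ (τ/2) a(u 0, u 0)`. -/
theorem stmt_4 {V : Type*} [NormedAddCommGroup V] [InnerProductSpace ℝ V]
    (a : V →ₗ[ℝ] V →ₗ[ℝ] ℝ)
    (hsymm : ∀ v w : V, a v w = a w v)
    (hpos : ∀ v : V, 0 ≤ a v v)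
    (τ : ℝ) (hτ : 0 < τ) (N : ℕ) (u : ℕ → V) (d : ℕ → V)
    (hupd : ∀ n, 1 ≤ n → n ≤ N → u n = u (n - 1) + τ • d n)
    (horth : ∀ n, 1 ≤ n → n ≤ N → ⟪d n, u (n - 1)⟫ = 0)
    (hscheme : ∀ n, 1 ≤ n → n ≤ N → ‖d n‖ ^ 2 + a (u n) (d n) = 0) :
    ∀ N', N' ≤ N →
      0 ≤ ‖u N'‖ ^ 2 - ‖u 0‖ ^ 2 ∧
      ‖u N'‖ ^ 2 - ‖u 0‖ ^ 2 = τ ^ 2 * ∑ j ∈ Finset.Icc 1 N', ‖d j‖ ^ 2 ∧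
      τ ^ 2 * ∑ j ∈ Finset.Icc 1 N', ‖d j‖ ^ 2 ≤ (τ / 2) * a (u 0) (u 0) := by
  have claim1 : ∀ n, n ≤ N →
      ‖u n‖ ^ 2 = ‖u 0‖ ^ 2 + τ ^ 2 * ∑ j ∈ Finset.Icc 1 n, ‖d j‖ ^ 2 := by
    intro n
    induction n with
    | zero => simp
    | succ n ih =>
      intro hn
      have hn' : n ≤ N := Nat.le_of_succ_le hn
      have h1 : 1 ≤ n + 1 := Nat.succ_le_succ (Nat.zero_le n)
      have hu : u (n + 1) = u n + τ • d (n + 1) := by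
        simpa using hupd (n + 1) h1 hn
      have ho : ⟪u n, d (n + 1)⟫ = (0 : ℝ) := by
        rw [real_inner_comm]
        simpa using horth (n + 1) h1 hn
      have hstep : ‖u (n + 1)‖ ^ 2 = ‖u n‖ ^ 2 + τ ^ 2 * ‖d (n + 1)‖ ^ 2 := by
        rw [hu, @norm_add_sq_real, real_inner_smul_right, ho, norm_smul]
        simp [mul_pow, abs_of_pos hτ]
      rw [hstep, ih hn', Finset.sum_Icc_succ_top h1]
      ring
  have claim2 : ∀ n, n ≤ N →
      τ * ∑ j ∈ Finset.Icc 1 n, ‖d j‖ ^ 2 + (1 / 2) * a (u n) (u n)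
        ≤ (1 / 2) * a (u 0) (u 0) := by
    intro n
    induction n with
    | zero => simp
    | succ n ih =>
      intro hn
      have hn' : n ≤ N := Nat.le_of_succ_le hn
      have h1 : 1 ≤ n + 1 := Nat.succ_le_succ (Nat.zero_le n)
      have hu : u (n + 1) = u n + τ • d (n + 1) := by
        simpa using hupd (n + 1) h1 hn
      have hs : ‖d (n + 1)‖ ^ 2 + a (u (n + 1)) (d (n + 1)) = 0 :=
        hscheme (n + 1) h1 hn
      have hexp : a (u n) (u n) =
          a (u (n + 1)) (u (n + 1)) - 2 * τ * a (u (n + 1)) (d (n + 1))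
            + τ ^ 2 * a (d (n + 1)) (d ( n + 1)) := by
        have hun : u n = u (n + 1) - τ • d (n + 1) := by
          rw [hu]; abel
        rw [hun]
        simp [map_sub, map_smul, LinearMap.sub_apply, LinearMap.smul_apply,
          smul_eq_mul, hsymm (d (n+1)) (u (n+1))]
        ring
      have hpd : 0 ≤ a (d (n + 1)) (d (n + 1)) := hpos _
      have hstep : τ * ‖d (n + 1)‖ ^ 2 + (1 / 2) * a (u (n + 1)) (u (n + 1))
          ≤ (1 / 2) * a (u n) (u n) := by
        nlinarith [sq_nonneg τ]
      have := ih hn'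
      rw [Finset.sum_Icc_succ_top h1]
      nlinarith
  intro N' hN'
  have h1 := claim1 N' hN'
  have h2 := claim2 N' hN'
  have hsum : 0 ≤ ∑ j ∈ Finset.Icc 1 N', ‖d j‖ ^ 2 :=
    Finset.sum_nonneg fun j _ => sq_nonneg _
  have hposN : 0 ≤ a (u N') (u N') := hpos _
  refine ⟨by nlinarith, by rw [h1]; ring, ?_⟩
  have : τ * ∑ j ∈ Finset.Icc 1 N', ‖d j‖ ^ 2 ≤ (1 / 2) * a (u 0) (u 0) := by
    nlinarith
  calc τ ^ 2 * ∑ j ∈ Finset.Icc 1 N', ‖d j‖ ^ 2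
      = τ * (τ * ∑ j ∈ Finset.Icc 1 N', ‖d j‖ ^ 2) := by ring
    _ ≤ τ * ((1 / 2) * a (u 0) (u 0)) := by
        exact mul_le_mul_of_nonneg_left this hτ.le
    _ = (τ / 2) * a (u 0) (u 0) := by ring
end
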